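/- Let n ≥ 2 and let u, v be tree representations on {1,…,n}. Then d(u,v) ≤ n; that is, the diameter of the space of tree representations on {1,…,n} under the HOP operation is at most n. -/

import Mathlib

/-
Cutting a tree representation at the second occurrences of `1, …, n` (which come in this order,
the last one ending the list) leaves `1` followed by `n` gaps, gap `t` holding the first
occurrences of some values `> t + 1`, each of `2, …, n` in exactly one gap. This is proved by
induction on `n`: the last entry is `n`, and deleting both copies of `n` leaves a tree
representation on `{1, …, n - 1}`, into one of whose gaps the first `n` is then put back.

Let `A` and `B` be the gap sequences of `u` and `v`, and let `M m` keep, in every gap, the values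
`≤ m` from `A` and the values `> m` from `B`. Then `M n = A`, `M 1 = B`, and passing from `M m` to
`M (m - 1)` only moves the first occurrence of `m` from its gap in `A` to its gap in `B`, both
before the second occurrence of `m - 1`: a single HOP. So `d(u, v) ≤ n - 1`.
-/

/-- 0-indexed position of the first occurrence of `x` in `v`. -/
def firstOcc (v : List ℕ) (x : ℕ) : ℕ := v.idxOf x

/-- 0-indexed position of the second (= last, when `x` occurs exactly twice)
occurrence of `x` in `v`. -/
def secondOcc (v : List ℕ) (x : ℕ) : ℕ := v.length - 1 - v.reverse.idxOf x

/-- `v` is a tree representation on `{1,…,n}`: it has length `2n`, entries in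
`{1,…,n}`, every `i ∈ {1,…,n}` occurs exactly twice, the first entry is `1`,
for every `i ∈ {2,…,n}` the first occurrence of `i` appears strictly before the
second occurrence of `i-1`, and the second occurrence of `i` appears strictly
after the second occurrence of `i-1`. -/
def IsTreeRep (n : ℕ) (v : List ℕ) : Prop :=
  v.length = 2 * n ∧
  (∀ x ∈ v, 1 ≤ x ∧ x ≤ n) ∧
  (∀ i, 1 ≤ i → i ≤ n → v.count i = 2) ∧
  v.getD 0 0 = 1 ∧
  (∀ i, 2 ≤ i → i ≤ n → firstOcc v i < secondOcc v (i - 1)) ∧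
  (∀ i, 2 ≤ i → i ≤ n → secondOcc v (i - 1) < secondOcc v i)

/-- A single HOP: for some `i ∈ {2,…,n}`, remove the first occurrence of `i`
from `v` and reinsert it at a (0-indexed) position `k` strictly after the first
entry (`1 ≤ k`) and weakly before the (resulting position of the) second
occurrence of `i-1`. -/
def IsHop (n : ℕ) (v v' : List ℕ) : Prop :=
  ∃ i k, 2 ≤ i ∧ i ≤ n ∧ 1 ≤ k ∧ k ≤ secondOcc (v.erase i) (i - 1) ∧
    v' = (v.erase i).insertIdx k i

/-- `u` can be transformed into `v` by a sequence of exactly `m` HOPs. -/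
def HopChain (n m : ℕ) (u v : List ℕ) : Prop :=
  ∃ f : ℕ → List ℕ, f 0 = u ∧ f m = v ∧ ∀ j < m, IsHop n (f j) (f (j + 1))

/-- The HOP distance: minimum number of HOPs transforming `u` into `v`. -/
noncomputable def hopDist (n : ℕ) (u v : List ℕ) : ℕ :=
  sInf {m | HopChain n m u v}

namespace TreeRep

open List

lemma insertIdx_length_append {α : Type*} (X Y : List α) (x : α) :
    (X ++ Y).insertIdx X.length x = X ++ x :: Y := by
  induction X with
  | nil => rfl
  | cons a X ih => simpa [insertIdx_succ_cons] using ih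

lemma exists_eq_append_cons_of_count_eq_one {α : Type*} [BEq α] [LawfulBEq α] {l : List α} {a : α}
    (h : l.count a = 1) :
    ∃ s t, l = s ++ a :: t ∧ a ∉ s ∧ a ∉ t := by
  obtain ⟨s, t, rfl⟩ := append_of_mem (count_pos_iff.mp (by omega : 0 < l.count a))
  simp only [count_append, count_cons_self] at h
  exact ⟨s, t, rfl, count_eq_zero.mp (by omega), count_eq_zero.mp (by omega)⟩

lemma exists_eq_append_cons_of_length_lt {α : Type*} {l : List α} {k : ℕ} (h : k < l.length) :
    ∃ l₁ a l₂, l = l₁ ++ a :: l₂ ∧ l₁.length = k :=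
  ⟨l.take k, l[k], l.drop (k + 1), by rw [← drop_eq_getElem_cons h, take_append_drop],
    length_take_of_le h.le⟩

/-- Inserting an entry at position `d` moves the other positions by this order embedding, so it
does not change how the occurrences of two other values compare. -/
def shiftFrom (d k : ℕ) : ℕ := if k < d then k else k + 1

lemma shiftFrom_lt_shiftFrom_iff {d a b : ℕ} : shiftFrom d a < shiftFrom d b ↔ a < b := by
  unfold shiftFrom; split_ifs <;> omega

lemma idxOf_append_cons {D E : List ℕ} {c x : ℕ} (hx : x ≠ c) :
    (D ++ c :: E).idxOf x = shiftFrom D.length ((D ++ E).idxOf x) := by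
  unfold shiftFrom
  by_cases hD : x ∈ D
  · rw [idxOf_append_of_mem hD, idxOf_append_of_mem hD, if_pos (idxOf_lt_length_iff.mpr hD)]
  · rw [idxOf_append_of_notMem hD, idxOf_append_of_notMem hD, idxOf_cons_ne _ hx.symm,
      if_neg (by omega)]
    rfl

lemma firstOcc_append_cons {D E : List ℕ} {c x : ℕ} (hx : x ≠ c) :
    firstOcc (D ++ c :: E) x = shiftFrom D.length (firstOcc (D ++ E) x) :=
  idxOf_append_cons hx

lemma secondOcc_append_cons {D E : List ℕ} {c x : ℕ} (hx : x ≠ c) (hmem : x ∈ D ++ E) :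
    secondOcc (D ++ c :: E) x = shiftFrom D.length (secondOcc (D ++ E) x) := by
  have hrev : (D ++ c :: E).reverse = E.reverse ++ c :: D.reverse := by simp
  have hlt : (E.reverse ++ D.reverse).idxOf x < D.length + E.length := by
    have : x ∈ E.reverse ++ D.reverse := by simp only [mem_append, mem_reverse] at hmem ⊢; tauto
    simpa [add_comm] using idxOf_lt_length_iff.mpr this
  unfold secondOcc shiftFrom
  rw [hrev, idxOf_append_cons hx, reverse_append]
  simp only [length_append, length_cons, length_reverse, shiftFrom]
  split_ifs <;> omega

lemma firstOcc_lt_secondOcc_append_cons_iff {D E : List ℕ} {c x z : ℕ} (hx : x ≠ c) (hz : z ≠ c)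
    (hzm : z ∈ D ++ E) :
    firstOcc (D ++ c :: E) x < secondOcc (D ++ c :: E) z ↔
      firstOcc (D ++ E) x < secondOcc (D ++ E) z := by
  rw [firstOcc_append_cons hx, secondOcc_append_cons hz hzm, shiftFrom_lt_shiftFrom_iff]

lemma secondOcc_lt_secondOcc_append_cons_iff {D E : List ℕ} {c x z : ℕ} (hx : x ≠ c)
    (hz : z ≠ c) (hxm : x ∈ D ++ E) (hzm : z ∈ D ++ E) :
    secondOcc (D ++ c :: E) z < secondOcc (D ++ c :: E) x ↔
      secondOcc (D ++ E) z < secondOcc (D ++ E) x := by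
  rw [secondOcc_append_cons hx hxm, secondOcc_append_cons hz hzm, shiftFrom_lt_shiftFrom_iff]

lemma firstOcc_append_cons_self {D E : List ℕ} {x : ℕ} (hx : x ∉ D) :
    firstOcc (D ++ x :: E) x = D.length := by
  simp [firstOcc, idxOf_append_of_notMem hx]

lemma secondOcc_append_singleton_self (l : List ℕ) (x : ℕ) :
    secondOcc (l ++ [x]) x = l.length := by
  simp [secondOcc]

lemma secondOcc_le (l : List ℕ) (x : ℕ) : secondOcc l x ≤ l.length - 1 := Nat.sub_le _ _

lemma length_le_secondOcc {X Y : List ℕ} {x : ℕ} (hx : x ∈ Y) :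
    X.length ≤ secondOcc (X ++ Y) x := by
  have h : Y.reverse.idxOf x < Y.length := by
    simpa using idxOf_lt_length_iff.mpr (mem_reverse.mpr hx)
  simp only [secondOcc, reverse_append, idxOf_append_of_mem (mem_reverse.mpr hx), length_append]
  omega

/-- A tree representation is `1 :: joinGaps 1 gs`: the markers `1, …, n` are the second
occurrences, and the gap `gs[t]` lists the first occurrences lying between the second occurrences
of `t` and `t + 1`. -/
def joinGaps : ℕ → List (List ℕ) → List ℕ
  | _, [] => []
  | s, g :: gs => g ++ s :: joinGaps (s + 1) gs

lemma joinGaps_append (G₁ G₂ : List (List ℕ)) (s : ℕ) :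
    joinGaps s (G₁ ++ G₂) = joinGaps s G₁ ++ joinGaps (s + G₁.length) G₂ := by
  induction G₁ generalizing s with
  | nil => simp [joinGaps]
  | cons g G₁ ih => simp [joinGaps, ih, Nat.add_assoc, Nat.add_comm 1]

lemma mem_joinGaps {s x : ℕ} {gs : List (List ℕ)} (h : x ∈ joinGaps s gs) :
    x ∈ gs.flatten ∨ s ≤ x ∧ x < s + gs.length := by
  induction gs generalizing s with
  | nil => simp [joinGaps] at h
  | cons g gs ih =>
    simp only [joinGaps, mem_append, mem_cons] at h
    rcases h with h | rfl | h
    · simp [h]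
    · simp
    · rcases ih h with h | h
      · simp [h]
      · simp only [length_cons]; omega

lemma mem_joinGaps_of_le {s m : ℕ} {gs : List (List ℕ)} (h₁ : s ≤ m) (h₂ : m < s + gs.length) :
    m ∈ joinGaps s gs := by
  induction gs generalizing s with
  | nil => simp at h₂; omega
  | cons g gs ih =>
    rcases h₁.eq_or_lt with rfl | h₁
    · simp [joinGaps]
    · simp [joinGaps, ih h₁ (by simp at h₂; omega)]

def IsGapInsert (x t : ℕ) (gs gs' : List (List ℕ)) : Prop :=
  ∃ G₁ P Q G₂, G₁.length = t ∧ gs = G₁ ++ (P ++ Q) :: G₂ ∧ gs' = G₁ ++ (P ++ x :: Q) :: G₂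

namespace IsGapInsert

variable {x t : ℕ} {gs gs' : List (List ℕ)}

lemma cons (h : IsGapInsert x t gs gs') (g : List ℕ) :
    IsGapInsert x (t + 1) (g :: gs) (g :: gs') := by
  obtain ⟨G₁, P, Q, G₂, rfl, rfl, rfl⟩ := h
  exact ⟨g :: G₁, P, Q, G₂, rfl, rfl, rfl⟩

lemma length_eq (h : IsGapInsert x t gs gs') : gs'.length = gs.length := by
  obtain ⟨G₁, P, Q, G₂, rfl, rfl, rfl⟩ := h
  simp

lemma lt_length (h : IsGapInsert x t gs gs') : t < gs.length := by
  obtain ⟨G₁, P, Q, G₂, rfl, rfl, rfl⟩ := h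
  simp

lemma flatten_perm (h : IsGapInsert x t gs gs') : gs'.flatten ~ x :: gs.flatten := by
  obtain ⟨G₁, P, Q, G₂, rfl, rfl, rfl⟩ := h
  simpa using perm_middle (l₁ := G₁.flatten ++ P) (l₂ := Q ++ G₂.flatten)

lemma mem_getD (h : IsGapInsert x t gs gs') : x ∈ gs'.getD t [] := by
  obtain ⟨G₁, P, Q, G₂, rfl, rfl, rfl⟩ := h
  simp

lemma mem_getD_imp (h : IsGapInsert x t gs gs') {t' y : ℕ} (hy : y ∈ gs'.getD t' []) :
    y = x ∨ y ∈ gs.getD t' [] := by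
  obtain ⟨G₁, P, Q, G₂, rfl, rfl, rfl⟩ := h
  rcases lt_or_ge t' G₁.length with ht | ht
  · rw [getD_append _ _ _ _ ht] at hy ⊢
    exact Or.inr hy
  · obtain ⟨_ | k, rfl⟩ := Nat.exists_eq_add_of_le ht
    · simp at hy ⊢
      tauto
    · simp only [getD_append_right _ _ _ _ ht, Nat.add_sub_cancel_left, getD_cons_succ] at hy ⊢
      exact Or.inr hy

lemma exists_joinGaps (h : IsGapInsert x t gs gs') (s : ℕ) :
    ∃ X Y, joinGaps s gs = X ++ Y ∧ joinGaps s gs' = X ++ x :: Y ∧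
      (∀ y ∈ X, y ∈ gs.flatten ∨ y < s + t) ∧ (∀ m, s + t ≤ m → m < s + gs.length → m ∈ Y) := by
  obtain ⟨G₁, P, Q, G₂, rfl, rfl, rfl⟩ := h
  refine ⟨joinGaps s G₁ ++ P, Q ++ (s + G₁.length) :: joinGaps (s + G₁.length + 1) G₂,
    by simp [joinGaps_append, joinGaps], by simp [joinGaps_append, joinGaps], ?_, ?_⟩
  · intro y hy
    rcases mem_append.mp hy with hy | hy
    · rcases mem_joinGaps hy with hy | hy
      · simp [hy]
      · omega
    · simp [hy]
  · intro m h₁ h₂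
    rcases h₁.eq_or_lt with rfl | h₁
    · simp
    · exact mem_append_right _ (mem_cons_of_mem _ (mem_joinGaps_of_le h₁ (by simp at h₂; omega)))

end IsGapInsert

lemma exists_isGapInsert_of_count_eq_one {gs : List (List ℕ)} {i : ℕ}
    (h : gs.flatten.count i = 1) : ∃ t C, IsGapInsert i t C gs ∧ i ∉ C.flatten := by
  obtain ⟨g, hg, hig⟩ := mem_flatten.mp (count_pos_iff.mp (by omega : 0 < gs.flatten.count i))
  obtain ⟨G₁, G₂, rfl⟩ := append_of_mem hg
  obtain ⟨P, Q, rfl⟩ := append_of_mem hig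
  have hins : IsGapInsert i G₁.length (G₁ ++ (P ++ Q) :: G₂) (G₁ ++ (P ++ i :: Q) :: G₂) :=
    ⟨G₁, P, Q, G₂, rfl, rfl, rfl⟩
  have hcount := hins.flatten_perm.count_eq i
  rw [h, count_cons_self] at hcount
  exact ⟨_, _, hins, count_eq_zero.mp (by omega)⟩

lemma exists_isGapInsert_of_append_eq_joinGaps {D E : List ℕ} {s : ℕ} {gs : List (List ℕ)}
    (h : D ++ E = joinGaps s gs) (hE : E ≠ []) (x : ℕ) :
    ∃ t gs', IsGapInsert x t gs gs' ∧ joinGaps s gs' = D ++ x :: E := by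
  induction gs generalizing s D with
  | nil => simp_all [joinGaps]
  | cons g gs ih =>
    have hfirst : ∀ Q, g = D ++ Q → E = Q ++ s :: joinGaps (s + 1) gs →
        ∃ t gs', IsGapInsert x t (g :: gs) gs' ∧ joinGaps s gs' = D ++ x :: E := by
      rintro Q rfl rfl
      exact ⟨0, (D ++ x :: Q) :: gs, ⟨[], D, Q, gs, rfl, rfl, rfl⟩, by simp [joinGaps]⟩
    rcases append_eq_append_iff.mp h with ⟨Q, hg, hE'⟩ | ⟨_ | ⟨s', R⟩, hD, hR⟩
    · exact hfirst Q hg hE'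
    · exact hfirst [] (by simp [hD]) (by simpa using hR.symm)
    · simp only [cons_append, cons.injEq] at hR
      obtain ⟨rfl, hR⟩ := hR
      obtain ⟨t, gs', hins, hjoin⟩ := ih hR.symm
      exact ⟨t + 1, g :: gs', hins.cons g, by simp [joinGaps, hjoin, hD]⟩

/-- Gap sequences of tree representations on `{1, …, n}`: gap `t` ends with the second occurrence
of `t + 1`, so it can only hold first occurrences of values `> t + 1`. -/
structure IsGapSeq (n : ℕ) (gs : List (List ℕ)) : Prop where
  length_eq : gs.length = n
  lt_of_mem_getD : ∀ t, ∀ x ∈ gs.getD t [], t + 1 < x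
  flatten_perm : gs.flatten ~ range' 2 (n - 1)

namespace IsGapSeq

variable {n : ℕ} {gs : List (List ℕ)}

lemma mem_flatten (h : IsGapSeq n gs) {x : ℕ} (hx : x ∈ gs.flatten) : 2 ≤ x ∧ x ≤ n := by
  have := mem_range'_1.mp (h.flatten_perm.subset hx)
  omega

lemma count_eq_one (h : IsGapSeq n gs) {i : ℕ} (h₂ : 2 ≤ i) (hi : i ≤ n) :
    gs.flatten.count i = 1 := by
  rw [h.flatten_perm.count_eq]
  exact count_eq_one_of_mem (nodup_range' _) (mem_range'_1.mpr (by omega))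

lemma one : IsGapSeq 1 [[]] where
  length_eq := rfl
  lt_of_mem_getD t x hx := by simp at hx
  flatten_perm := by simp

lemma append_nil_of_isGapInsert (h : IsGapSeq n gs) {t : ℕ} {gs' : List (List ℕ)}
    (hins : IsGapInsert (n + 1) t gs gs') : IsGapSeq (n + 1) (gs' ++ [[]]) where
  length_eq := by simp [hins.length_eq, h.length_eq]
  lt_of_mem_getD t' y hy := by
    rcases lt_or_ge t' gs'.length with ht' | ht'
    · rw [getD_append _ _ _ _ ht'] at hy
      rcases hins.mem_getD_imp hy with rfl | hy
      · rw [hins.length_eq, h.length_eq] at ht'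
        omega
      · exact h.lt_of_mem_getD t' y hy
    · rw [getD_append_right _ _ _ _ ht'] at hy
      simp at hy
  flatten_perm := by
    obtain ⟨m, rfl⟩ : ∃ m, n = m + 1 := ⟨n - 1, by have := h.length_eq ▸ hins.lt_length; omega⟩
    rw [flatten_append, flatten_singleton, append_nil, Nat.add_sub_cancel, range'_concat]
    refine hins.flatten_perm.trans ((h.flatten_perm.cons _).trans ?_)
    rw [Nat.add_sub_cancel, show 2 + 1 * m = m + 1 + 1 by omega]
    exact (perm_append_singleton _ _).symm

end IsGapSeq

end TreeRep

namespace IsTreeRep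

open List TreeRep

variable {n : ℕ} {w D E : List ℕ}

lemma exists_eq_append_singleton (h : IsTreeRep n w) (hn : 1 ≤ n) : ∃ w', w = w' ++ [n] := by
  obtain ⟨hlen, hmem, -, -, -, hsecond⟩ := h
  rcases eq_nil_or_concat w with rfl | ⟨w', y, rfl⟩
  · simp at hlen
    omega
  obtain ⟨hy₁, hyn⟩ := hmem y (by simp)
  suffices hy : y = n by exact ⟨w', by simp [hy]⟩
  by_contra hne
  have hlt := hsecond (y + 1) (by omega) (by omega)
  have hle := secondOcc_le (w' ++ [y]) (y + 1)
  simp only [Nat.add_sub_cancel, concat_eq_append, secondOcc_append_singleton_self] at hlt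
  simp at hle
  omega

lemma exists_eq_append_cons_append (h : IsTreeRep (n + 1) w) :
    ∃ D E, w = D ++ (n + 1) :: E ++ [n + 1] ∧ n + 1 ∉ D ∧ n + 1 ∉ E := by
  obtain ⟨w', rfl⟩ := h.exists_eq_append_singleton (by omega)
  have hcount : w'.count (n + 1) = 1 := by
    simpa [count_append] using h.2.2.1 (n + 1) (by omega) le_rfl
  obtain ⟨D, E, rfl, hD, hE⟩ := exists_eq_append_cons_of_count_eq_one hcount
  exact ⟨D, E, rfl, hD, hE⟩

lemma ne_nil_of_append_cons_append (h : IsTreeRep (n + 1) (D ++ (n + 1) :: E ++ [n + 1]))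
    (hD : n + 1 ∉ D) (hn : 1 ≤ n) : E ≠ [] := by
  rintro rfl
  obtain ⟨-, -, -, -, hfirst, hsecond⟩ := h
  have h₁ := hfirst (n + 1) (by omega) le_rfl
  have h₂ := hsecond (n + 1) (by omega) le_rfl
  have hle := secondOcc_le (D ++ [n + 1] ++ [n + 1]) (n + 1)
  simp only [append_assoc, singleton_append, Nat.add_sub_cancel] at h₁ h₂ hle
  rw [firstOcc_append_cons_self hD] at h₁
  simp only [length_append, length_cons, length_nil] at hle
  omega

lemma of_append_cons_append (h : IsTreeRep (n + 1) (D ++ (n + 1) :: E ++ [n + 1]))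
    (hD : n + 1 ∉ D) (hE : n + 1 ∉ E) (hn : 1 ≤ n) : IsTreeRep n (D ++ E) := by
  obtain ⟨hlen, hmem, hcount, hhead, hfirst, hsecond⟩ := h
  have hw : D ++ (n + 1) :: E ++ [n + 1] = D ++ (n + 1) :: (E ++ (n + 1) :: []) := by simp
  have hcount' : ∀ i, 1 ≤ i → i ≤ n → (D ++ E).count i = 2 := fun i h₁ h₂ => by
    have := hcount i h₁ (by omega)
    simp only [count_append, count_cons, count_nil, beq_iff_eq] at this ⊢
    split_ifs at this <;> omega
  have hmem' : ∀ i, 1 ≤ i → i ≤ n → i ∈ D ++ E := fun i h₁ h₂ =>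
    count_pos_iff.mp (by rw [hcount' i h₁ h₂]; omega)
  have hmid : ∀ i, 1 ≤ i → i ≤ n → i ∈ D ++ (E ++ [n + 1]) := fun i h₁ h₂ => by
    have := hmem' i h₁ h₂
    simp only [mem_append] at this ⊢
    tauto
  refine ⟨by simp at hlen ⊢; omega, fun x hx => ?_, hcount', ?_, fun i h₂ hi => ?_,
    fun i h₂ hi => ?_⟩
  · have hxc : x ≠ n + 1 := by rintro rfl; simp_all
    have := hmem x (by simp at hx ⊢; tauto)
    omega
  · rcases D with _ | ⟨d, D⟩
    · simp at hhead
      omega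
    · simpa using hhead
  · have := hfirst i h₂ (by omega)
    rwa [hw, firstOcc_lt_secondOcc_append_cons_iff (by omega) (by omega)
        (hmid _ (by omega) (by omega)), ← append_assoc,
      firstOcc_lt_secondOcc_append_cons_iff (E := []) (by omega) (by omega)
        (by simpa using hmem' _ (by omega) (by omega)), append_nil] at this
  · have := hsecond i h₂ (by omega)
    rwa [hw, secondOcc_lt_secondOcc_append_cons_iff (by omega) (by omega) (hmid _ (by omega) hi)
        (hmid _ (by omega) (by omega)),
      ← append_assoc, secondOcc_lt_secondOcc_append_cons_iff (E := []) (by omega) (by omega)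
        (by simpa using hmem' _ (by omega) hi) (by simpa using hmem' _ (by omega) (by omega)),
      append_nil] at this

theorem exists_isGapSeq (h : IsTreeRep n w) : ∃ gs, IsGapSeq n gs ∧ w = 1 :: joinGaps 1 gs := by
  induction n generalizing w with
  | zero =>
    obtain ⟨hlen, -, -, hhead, -⟩ := h
    simp [length_eq_zero_iff.mp hlen] at hhead
  | succ n ih =>
    obtain ⟨D, E, rfl, hD, hE⟩ := h.exists_eq_append_cons_append
    rcases Nat.eq_zero_or_pos n with rfl | hn
    · have hlen := h.1
      simp only [length_append, length_cons, length_nil] at hlen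
      rw [length_eq_zero_iff.mp (by omega : D.length = 0),
        length_eq_zero_iff.mp (by omega : E.length = 0)]
      exact ⟨[[]], IsGapSeq.one, rfl⟩
    obtain ⟨gs, hgs, hDE⟩ := ih (h.of_append_cons_append hD hE hn)
    rcases D with _ | ⟨d, D⟩
    · obtain ⟨-, -, -, hhead, -⟩ := h
      simp at hhead
      omega
    simp only [cons_append, cons.injEq] at hDE
    obtain ⟨rfl, hDE⟩ := hDE
    obtain ⟨t, gs', hins, hjoin⟩ := exists_isGapInsert_of_append_eq_joinGaps hDE
      (h.ne_nil_of_append_cons_append hD hn) (n + 1)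
    refine ⟨gs' ++ [[]], hgs.append_nil_of_isGapInsert hins, ?_⟩
    rw [joinGaps_append, hjoin, hins.length_eq, hgs.length_eq]
    simp [joinGaps, Nat.add_comm 1 n]

end IsTreeRep

namespace TreeRep

open List

def mixGaps (p q : ℕ) (A B : List (List ℕ)) : List (List ℕ) :=
  zipWith (fun a b => a.filter (· < p) ++ b.filter (q < ·)) A B

section Mix

variable {p q : ℕ} {A B : List (List ℕ)}

lemma length_mixGaps : (mixGaps p q A B).length = min A.length B.length := length_zipWith

lemma mixGaps_eq_left (hlen : A.length = B.length) (hA : ∀ x ∈ A.flatten, x < p)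
    (hB : ∀ x ∈ B.flatten, x ≤ q) : mixGaps p q A B = A := by
  refine ext_getElem (by simp [length_mixGaps, hlen]) fun k _ _ => ?_
  simp only [mixGaps, getElem_zipWith]
  rw [filter_eq_self.mpr fun x hx => by simpa using hA x (mem_flatten_of_mem (getElem_mem _) hx),
    filter_eq_nil_iff.mpr fun x hx => by simpa using hB x (mem_flatten_of_mem (getElem_mem _) hx),
    append_nil]

lemma mixGaps_eq_right (hlen : A.length = B.length) (hA : ∀ x ∈ A.flatten, p ≤ x)
    (hB : ∀ x ∈ B.flatten, q < x) : mixGaps p q A B = B := by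
  refine ext_getElem (by simp [length_mixGaps, hlen]) fun k _ _ => ?_
  simp only [mixGaps, getElem_zipWith]
  rw [filter_eq_nil_iff.mpr fun x hx => by simpa using hA x (mem_flatten_of_mem (getElem_mem _) hx),
    filter_eq_self.mpr fun x hx => by simpa using hB x (mem_flatten_of_mem (getElem_mem _) hx),
    nil_append]

lemma not_mem_flatten_mixGaps_self (i : ℕ) : i ∉ (mixGaps i i A B).flatten := by
  intro h
  obtain ⟨g, hg, hi⟩ := mem_flatten.mp h
  obtain ⟨k, hk, rfl⟩ := mem_iff_getElem.mp hg
  simp [mixGaps] at hi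

lemma filter_lt_succ_eq {l : List ℕ} {i : ℕ} (h : i ∉ l) :
    l.filter (· < i + 1) = l.filter (· < i) :=
  filter_congr fun x hx => by
    have : x ≠ i := fun hxi => h (hxi ▸ hx)
    simp only [decide_eq_decide]
    omega

lemma filter_pred_lt_eq {l : List ℕ} {i : ℕ} (h : i ∉ l) :
    l.filter (i - 1 < ·) = l.filter (i < ·) :=
  filter_congr fun x hx => by
    have : x ≠ i := fun hxi => h (hxi ▸ hx)
    simp only [decide_eq_decide]
    omega

lemma mixGaps_succ_left {i : ℕ} (hA : i ∉ A.flatten) :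
    mixGaps (i + 1) q A B = mixGaps i q A B := by
  refine ext_getElem (by simp [length_mixGaps]) fun k _ _ => ?_
  simp only [mixGaps, getElem_zipWith]
  rw [filter_lt_succ_eq fun hi => hA (mem_flatten_of_mem (getElem_mem _) hi)]

lemma mixGaps_pred_right {i : ℕ} (hB : i ∉ B.flatten) :
    mixGaps p (i - 1) A B = mixGaps p i A B := by
  refine ext_getElem (by simp [length_mixGaps]) fun k _ _ => ?_
  simp only [mixGaps, getElem_zipWith]
  rw [filter_pred_lt_eq fun hi => hB (mem_flatten_of_mem (getElem_mem _) hi)]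

lemma mixGaps_append_cons {G₁ G₂ V₁ V₂ : List (List ℕ)} {a b : List ℕ}
    (hlen : G₁.length = V₁.length) :
    mixGaps p q (G₁ ++ a :: G₂) (V₁ ++ b :: V₂) =
      mixGaps p q G₁ V₁ ++ (a.filter (· < p) ++ b.filter (q < ·)) :: mixGaps p q G₂ V₂ := by
  simp [mixGaps, zipWith_append hlen]

end Mix

section Hop

variable {n : ℕ} {A B C : List (List ℕ)} {i t : ℕ}

lemma IsGapInsert.mixGaps_left (h : IsGapInsert i t C A) (hC : i ∉ C.flatten)
    (hlen : A.length = B.length) :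
    IsGapInsert i t (mixGaps i i A B) (mixGaps (i + 1) i A B) := by
  obtain ⟨G₁, P, Q, G₂, rfl, rfl, rfl⟩ := h
  obtain ⟨V₁, b, V₂, rfl, hV⟩ :=
    exists_eq_append_cons_of_length_lt (k := G₁.length) (l := B) (by simp at hlen; omega)
  simp only [flatten_append, flatten_cons, mem_append, not_or] at hC
  obtain ⟨hG₁, ⟨hP, hQ⟩, hG₂⟩ := hC
  rw [mixGaps_append_cons hV.symm, mixGaps_append_cons hV.symm, mixGaps_succ_left hG₁,
    mixGaps_succ_left hG₂]
  refine ⟨mixGaps i i G₁ V₁, P.filter (· < i), Q.filter (· < i) ++ b.filter (i < ·),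
    mixGaps i i G₂ V₂, by simp [length_mixGaps, hV], by simp, ?_⟩
  rw [filter_append, filter_cons_of_pos (by simp), filter_lt_succ_eq hP, filter_lt_succ_eq hQ]
  simp

lemma IsGapInsert.mixGaps_right (h : IsGapInsert i t C B) (hC : i ∉ C.flatten)
    (hlen : A.length = B.length) (hi : 0 < i) :
    IsGapInsert i t (mixGaps i i A B) (mixGaps i (i - 1) A B) := by
  obtain ⟨H₁, R, S, H₂, rfl, rfl, rfl⟩ := h
  obtain ⟨U₁, a, U₂, rfl, hU⟩ :=
    exists_eq_append_cons_of_length_lt (k := H₁.length) (l := A) (by simp at hlen; omega)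
  simp only [flatten_append, flatten_cons, mem_append, not_or] at hC
  obtain ⟨hH₁, ⟨hR, hS⟩, hH₂⟩ := hC
  rw [mixGaps_append_cons hU, mixGaps_append_cons hU, mixGaps_pred_right hH₁,
    mixGaps_pred_right hH₂]
  refine ⟨mixGaps i i U₁ H₁, a.filter (· < i) ++ R.filter (i < ·), S.filter (i < ·),
    mixGaps i i U₂ H₂, by simp [length_mixGaps, hU], by simp, ?_⟩
  simp [filter_pred_lt_eq hR, filter_pred_lt_eq hS, Nat.sub_lt hi Nat.one_pos]

lemma isHop_of_isGapInsert {t' : ℕ} {M M' : List (List ℕ)} (hC : i ∉ C.flatten)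
    (hM : IsGapInsert i t C M) (hM' : IsGapInsert i t' C M') (ht : t + 1 < i) (ht' : t' + 1 < i)
    (hiC : i ≤ C.length) (hin : i ≤ n) :
    IsHop n (1 :: joinGaps 1 M) (1 :: joinGaps 1 M') := by
  obtain ⟨X, Y, hC₁, hM₁, hX, -⟩ := hM.exists_joinGaps 1
  obtain ⟨X', Y', hC₂, hM₂, -, hY'⟩ := hM'.exists_joinGaps 1
  have hiX : i ∉ 1 :: X := by
    simp only [mem_cons, not_or]
    refine ⟨by omega, fun hi => ?_⟩
    rcases hX i hi with h | h
    · exact hC h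
    · omega
  have herase : (1 :: joinGaps 1 M).erase i = (1 :: X') ++ Y' := by
    rw [hM₁, ← cons_append, erase_append_right _ hiX, erase_cons_head, cons_append, ← hC₁, hC₂,
      cons_append]
  refine ⟨i, (1 :: X').length, by omega, hin, by simp, ?_, ?_⟩
  · rw [herase]
    exact length_le_secondOcc (hY' (i - 1) (by omega) (by omega))
  · rw [herase, insertIdx_length_append, hM₂]
    rfl

lemma isHop_mixGaps (hA : IsGapSeq n A) (hB : IsGapSeq n B) (h₂ : 2 ≤ i) (hin : i ≤ n) :
    IsHop n (1 :: joinGaps 1 (mixGaps (i + 1) i A B))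
      (1 :: joinGaps 1 (mixGaps i (i - 1) A B)) := by
  obtain ⟨t, CA, hAins, hCA⟩ := exists_isGapInsert_of_count_eq_one (hA.count_eq_one h₂ hin)
  obtain ⟨t', CB, hBins, hCB⟩ := exists_isGapInsert_of_count_eq_one (hB.count_eq_one h₂ hin)
  have hlen : A.length = B.length := hA.length_eq.trans hB.length_eq.symm
  exact isHop_of_isGapInsert (not_mem_flatten_mixGaps_self i) (hAins.mixGaps_left hCA hlen)
    (hBins.mixGaps_right hCB hlen (by omega)) (hA.lt_of_mem_getD t i hAins.mem_getD)
    (hB.lt_of_mem_getD t' i hBins.mem_getD) (by simp [length_mixGaps, hlen, hB.length_eq, hin])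
    hin

lemma hopChain_joinGaps (hA : IsGapSeq n A) (hB : IsGapSeq n B) :
    HopChain n (n - 1) (1 :: joinGaps 1 A) (1 :: joinGaps 1 B) := by
  have hlen : A.length = B.length := hA.length_eq.trans hB.length_eq.symm
  refine ⟨fun j => 1 :: joinGaps 1 (mixGaps (n - j + 1) (n - j) A B), ?_, ?_, fun j hj => ?_⟩
  · dsimp only
    rw [mixGaps_eq_left hlen (fun x hx => by have := hA.mem_flatten hx; omega)
      (fun x hx => by have := hB.mem_flatten hx; omega)]
  · dsimp only
    rw [mixGaps_eq_right hlen (fun x hx => by have := hA.mem_flatten hx; omega)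
      (fun x hx => by have := hB.mem_flatten hx; omega)]
  · dsimp only
    rw [show n - (j + 1) + 1 = n - j by omega, show n - (j + 1) = n - j - 1 by omega]
    exact isHop_mixGaps hA hB (by omega) (by omega)

end Hop

end TreeRep

theorem stmt15_general (n : ℕ) (u v : List ℕ)
    (hu : IsTreeRep n u) (hv : IsTreeRep n v) :
    hopDist n u v ≤ n := by
  obtain ⟨A, hA, rfl⟩ := hu.exists_isGapSeq
  obtain ⟨B, hB, rfl⟩ := hv.exists_isGapSeq
  exact (Nat.sInf_le (TreeRep.hopChain_joinGaps hA hB)).trans (Nat.sub_le n 1)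

/-- For `n ≥ 2` and tree representations `u, v` on `{1,…,n}`, `d(u,v) ≤ n`:
the diameter of the space of tree representations under HOPs is at most `n`. -/
theorem stmt15 (n : ℕ) (hn : 2 ≤ n) (u v : List ℕ)
    (hu : IsTreeRep n u) (hv : IsTreeRep n v) :
    hopDist n u v ≤ n :=
  stmt15_general n u v hu hv
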